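/- arXiv:1004.0720 — 7 statements merged into one kernel-verified Lean document; each statement's English description precedes it below -/
import Mathlib

section
/- Let e₁,…,eₙ be the standard basis of ℂⁿ. Define E_j = e_j for 1 ≤ j ≤ n and E_{n+j} = Σ_{k=1}^n k^{j-1} e_k for 1 ≤ j ≤ n−1. Then for any indices 1 ≤ j₁ < j₂ < ⋯ < jₙ ≤ 2n−1, the set {E_{j₁}, …, E_{jₙ}} is linearly independent over ℂ. -/
/-!
Say `b` of the chosen vectors are power vectors, with distinct exponents `d ≤ n - 2`, and the
other `n - b` are basis vectors `e_t`. On the `b` coordinates `k` missed by the basis vectors,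
the power vectors restrict to the generalized Vandermonde matrix `((k + 1) ^ d)`; the exponents
need not be consecutive, so its invertibility comes from Descartes' rule of signs: a real
polynomial with `b` nonzero terms has fewer than `b` positive roots. Hence a vanishing
combination has zero coefficients on the power vectors, and then, reading off the coordinates
`t`, on the basis vectors too.
-/

/-- The vectors `E_j`: for `j < n`, the standard basis vector `e_j`, and for
`n ≤ j ≤ 2n-2`, the vector whose `k`-th coordinate (1-based `k`) is `k^(j-n)`. -/
noncomputable def Evec (n : ℕ) : Fin (2 * n - 1) → Fin n → ℂ := fun j k =>
  if (j : ℕ) < n then (if (j : ℕ) = (k : ℕ) then 1 else 0)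
  else ((k : ℕ) + 1 : ℂ) ^ ((j : ℕ) - n)

open Polynomial Finset

namespace Polynomial

theorem signVariations_lt_card_support {R : Type*} [Semiring R] [LinearOrder R] {P : R[X]}
    (hP : P ≠ 0) : P.signVariations < #P.support := by
  induction hc : #P.support generalizing P with
  | zero => exact absurd (card_support_eq_zero.mp hc) hP
  | succ c ih =>
    by_cases he : P.eraseLead = 0
    · rw [← eraseLead_add_monomial_natDegree_leadingCoeff P, he, zero_add,
        signVariations_monomial]
      exact c.succ_pos
    · have := ih he (card_support_eraseLead' hc)
      have := P.signVariations_le_eraseLead_succ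
      omega

theorem card_lt_card_support_of_forall_isRoot_pos {R : Type*} [CommRing R] [LinearOrder R]
    [IsStrictOrderedRing R] {P : R[X]} (hP : P ≠ 0) {S : Finset R}
    (hS : ∀ x ∈ S, 0 < x ∧ P.IsRoot x) : #S < #P.support := by
  have hle : S.val ≤ P.roots.filter (0 < ·) :=
    (Multiset.le_iff_subset S.nodup).mpr fun x hx =>
      Multiset.mem_filter.mpr ⟨(mem_roots hP).mpr (hS x hx).2, (hS x hx).1⟩
  calc #S ≤ P.roots.countP (0 < ·) := by
        rw [Multiset.countP_eq_card_filter]; exact Multiset.card_le_card hle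
    _ ≤ P.signVariations := P.roots_countP_pos_le_signVariations
    _ < #P.support := signVariations_lt_card_support hP

theorem coeff_finsetSum_monomial {ι R : Type*} [Semiring R] {B : Finset ι} {e : ι → ℕ}
    (c : ι → R) (k : ℕ) :
    (∑ i ∈ B, monomial (e i) (c i)).coeff k = ∑ i ∈ B with e i = k, c i := by
  simp only [finsetSum_coeff, coeff_monomial, sum_filter]

end Polynomial

theorem eq_zero_of_forall_sum_mul_pow_eq_zero {ι R : Type*} [CommRing R] [LinearOrder R]
    [IsStrictOrderedRing R] {B : Finset ι} {e : ι → ℕ} (he : Set.InjOn e B) (c : ι → R)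
    {S : Finset R} (hS : ∀ x ∈ S, 0 < x) (hcard : #B ≤ #S)
    (hc : ∀ x ∈ S, ∑ i ∈ B, c i * x ^ e i = 0) : ∀ i ∈ B, c i = 0 := by
  classical
  set P : R[X] := ∑ i ∈ B, monomial (e i) (c i)
  have hcoeff : ∀ j ∈ B, P.coeff (e j) = c j := fun j hj => by
    rw [coeff_finsetSum_monomial, filter_congr fun i hi => he.eq_iff hi hj,
      sum_filter, sum_ite_eq' B j c, if_pos hj]
  have hsupp : #P.support ≤ #B := by
    refine (card_le_card fun k hk => ?_).trans (card_image_le (f := e))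
    rw [mem_support_iff, coeff_finsetSum_monomial] at hk
    obtain ⟨i, hi⟩ := nonempty_of_sum_ne_zero hk
    rw [mem_filter] at hi
    exact mem_image.mpr ⟨i, hi⟩
  have hP : P = 0 := by
    by_contra hP
    refine (card_lt_card_support_of_forall_isRoot_pos hP fun x hx => ⟨hS x hx, ?_⟩).not_ge
      (hsupp.trans hcard)
    simpa [P, eval_finsetSum] using hc x hx
  intro j hj
  rw [← hcoeff j hj, hP, coeff_zero]

theorem Complex.eq_zero_of_forall_sum_mul_pow_eq_zero {ι : Type*} {B : Finset ι} {e : ι → ℕ}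
    (he : Set.InjOn e B) (g : ι → ℂ) {S : Finset ℝ} (hS : ∀ x ∈ S, 0 < x) (hcard : #B ≤ #S)
    (hg : ∀ x ∈ S, ∑ i ∈ B, g i * (x : ℂ) ^ e i = 0) : ∀ i ∈ B, g i = 0 := by
  have hre := _root_.eq_zero_of_forall_sum_mul_pow_eq_zero he (fun i => (g i).re) hS hcard
    fun x hx => by simpa [← ofReal_pow] using congrArg Complex.re (hg x hx)
  have him := _root_.eq_zero_of_forall_sum_mul_pow_eq_zero he (fun i => (g i).im) hS hcard
    fun x hx => by simpa [← ofReal_pow] using congrArg Complex.im (hg x hx)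
  exact fun i hi => Complex.ext (hre i hi) (him i hi)

theorem card_filter_le_le_card_range_sdiff_image {n : ℕ} (f : Fin n → ℕ) :
    #{i | n ≤ f i} ≤ #(range n \ univ.image f) := by
  classical
  have hsplit : #{i | f i < n} + #{i | n ≤ f i} = n := by
    simpa using card_filter_add_card_filter_not (s := univ) fun i => f i < n
  have hhit : #(univ.image f ∩ range n) ≤ #{i | f i < n} := by
    refine (card_le_card fun k hk => ?_).trans (card_image_le (f := f))
    obtain ⟨hk, hkn⟩ := mem_inter.mp hk
    obtain ⟨i, -, rfl⟩ := mem_image.mp hk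
    exact mem_image.mpr ⟨i, by simpa using hkn, rfl⟩
  rw [card_sdiff, card_range]
  omega

section Evec

variable {ι : Type*} [Fintype ι] {n : ℕ} {s : ι → Fin (2 * n - 1)} (g : ι → ℂ)

theorem Evec_apply_of_ne {j : Fin (2 * n - 1)} {k : Fin n} (h : (j : ℕ) ≠ k) :
    Evec n j k = if (j : ℕ) < n then 0 else ((k : ℕ) + 1 : ℂ) ^ ((j : ℕ) - n) := by
  simp [Evec, h]

theorem sum_mul_Evec_apply_of_forall_ne {k : Fin n} (hk : ∀ i, (s i : ℕ) ≠ k) :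
    ∑ i, g i * Evec n (s i) k =
      ∑ i with n ≤ (s i : ℕ), g i * ((k : ℕ) + 1 : ℂ) ^ ((s i : ℕ) - n) := by
  rw [sum_filter]
  refine sum_congr rfl fun i _ => ?_
  rw [Evec_apply_of_ne (hk i)]
  split_ifs <;> first | omega | simp

theorem sum_mul_Evec_apply_eq_of_lt (hs : Function.Injective s)
    (hpow : ∀ j, n ≤ (s j : ℕ) → g j = 0) {i : ι} (hi : (s i : ℕ) < n) :
    ∑ j, g j * Evec n (s j) ⟨s i, hi⟩ = g i := by
  rw [sum_eq_single i (fun j _ hji => ?_) (by simp), Evec, if_pos hi, if_pos rfl, mul_one]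
  by_cases hj : (s j : ℕ) < n
  · rw [Evec_apply_of_ne (by simpa [Fin.val_inj] using hs.ne hji), if_pos hj, mul_zero]
  · rw [hpow j (not_lt.mp hj), zero_mul]

end Evec

theorem eq_zero_of_le_of_forall_sum_mul_Evec_apply_eq_zero {n : ℕ} {s : Fin n → Fin (2 * n - 1)}
    (hs : Function.Injective s) {g : Fin n → ℂ}
    (hcoord : ∀ k, ∑ i, g i * Evec n (s i) k = 0) : ∀ i, n ≤ (s i : ℕ) → g i = 0 := by
  classical
  set K := range n \ univ.image fun i => (s i : ℕ)
  suffices h : ∀ i ∈ univ.filter fun i => n ≤ (s i : ℕ), g i = 0 from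
    fun i hi => h i (by simpa using hi)
  refine Complex.eq_zero_of_forall_sum_mul_pow_eq_zero (e := fun i => (s i : ℕ) - n)
    (fun i hi j hj hij => ?_) g (S := K.image fun k : ℕ => (k : ℝ) + 1) ?_ ?_ ?_
  · simp only [coe_filter, Set.mem_ofPred_eq, mem_univ, true_and] at hi hj hij
    exact hs (Fin.val_injective (by omega))
  · simp only [mem_image]
    rintro _ ⟨k, -, rfl⟩
    positivity
  · rw [card_image_of_injective _ fun a b h => by simpa using h]
    exact card_filter_le_le_card_range_sdiff_image _
  · simp only [mem_image]
    rintro _ ⟨k, hk, rfl⟩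
    obtain ⟨hkn, hks⟩ := mem_sdiff.mp hk
    rw [← hcoord ⟨k, mem_range.mp hkn⟩, sum_mul_Evec_apply_of_forall_ne g fun i hik =>
      hks (mem_image.mpr ⟨i, mem_univ _, hik⟩)]
    simp

/-- Any `n` of the `2n-1` vectors `E_j` are linearly independent over `ℂ`. -/
theorem hankel_stmt1 (n : ℕ) (s : Fin n → Fin (2 * n - 1)) (hs : StrictMono s) :
    LinearIndependent ℂ (fun i => Evec n (s i)) := by
  rw [Fintype.linearIndependent_iff]
  intro g hg
  have hcoord (k : Fin n) : ∑ i, g i * Evec n (s i) k = 0 := by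
    simpa using congrFun hg k
  have hpow := eq_zero_of_le_of_forall_sum_mul_Evec_apply_eq_zero hs.injective hcoord
  intro i
  by_cases hi : (s i : ℕ) < n
  · rw [← sum_mul_Evec_apply_eq_of_lt g hs.injective hpow hi, hcoord]
  · exact hpow i (not_lt.mp hi)
end

section
/- Let φ'(z) = Σ_{n∈ℤ} aₙ zⁿ and ψ'(z) = Σ_{m∈ℤ} b_m z^m be convergent Laurent series on an annulus {r < |z| < R}. If the function z ↦ conj(ψ'(z))·φ'(z) is radial (depends only on |z|), then aₙ · conj(b_m) = 0 for all n ≠ m. -/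
/-!
Write `z = ρ e^{iy}` on a circle `‖z‖ = ρ` inside the annulus. Multiplying the two Laurent series,
`conj (ψ' z) * φ' z = ∑ₖ (∑ₘ aₖ₊ₘ conj bₘ ρ^(k+2m)) e^{iky}`, and radiality makes this constant
in `y`, so its Fourier coefficients with `k ≠ 0` vanish. For fixed `k ≠ 0` the Laurent series
`∑ₘ aₖ₊ₘ conj bₘ tᵐ` therefore vanishes for every `t ∈ (r², R²)`. After the substitution `t = eˢ`
it is holomorphic on a vertical strip and vanishes on a real segment, hence on the whole strip
by the identity theorem; its Fourier coefficients along a vertical line are then all zero.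
-/

open Complex ComplexConjugate MeasureTheory Filter Topology
open scoped Real

lemma integral_exp_int_mul_mul_I (j : ℤ) :
    ∫ y in (0 : ℝ)..2 * π, exp (j * y * I) = if j = 0 then 2 * π else 0 := by
  split_ifs with hj
  · simp [hj]
  · have hjI : (j : ℂ) * I ≠ 0 := mul_ne_zero (Int.cast_ne_zero.mpr hj) I_ne_zero
    have hperiod : exp (j * I * (2 * π)) = 1 := by
      rw [← exp_int_mul_two_pi_mul_I j]; ring_nf
    simp_rw [mul_right_comm _ _ I]
    simp [integral_exp_mul_complex hjI, hperiod]

lemma integral_mul_exp_neg_eq_two_pi_mul_coeff {c : ℤ → ℂ} {g : ℝ → ℂ}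
    (hg : ∀ y : ℝ, HasSum (fun m : ℤ => c m * exp (m * y * I)) (g y)) (j : ℤ) :
    ∫ y in (0 : ℝ)..2 * π, g y * exp (-(j * y * I)) = 2 * π * c j := by
  have hc : Summable fun m => ‖c m‖ :=
    summable_norm_iff.mpr (by simpa using (hg 0).summable)
  have hterm (m : ℤ) : ∫ y in (0 : ℝ)..2 * π, c m * exp (m * y * I) * exp (-(j * y * I))
      = if m = j then 2 * π * c j else 0 := by
    have hexp (y : ℝ) :
        c m * exp (m * y * I) * exp (-(j * y * I)) = c m * exp ((m - j : ℤ) * y * I) := by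
      rw [mul_assoc, ← exp_add]; push_cast; ring_nf
    simp_rw [hexp, intervalIntegral.integral_const_mul, integral_exp_int_mul_mul_I, sub_eq_zero]
    split_ifs with h <;> simp [h, mul_comm]
  have hsum := intervalIntegral.hasSum_integral_of_dominated_convergence
    (F := fun m y => c m * exp (m * y * I) * exp (-(j * y * I))) (μ := volume)
    (a := 0) (b := 2 * π)
    (fun m _ => ‖c m‖) (fun m => by fun_prop) (fun m => ae_of_all _ fun y _ => by
      simp [norm_exp])
    (ae_of_all _ fun _ _ => hc) intervalIntegrable_const
    (ae_of_all _ fun y _ => (hg y).mul_right _)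
  simp only [hterm] at hsum
  exact hsum.unique (hasSum_ite_eq j _)

lemma coeff_eq_ite_of_forall_hasSum_mul_exp_mul_I {c : ℤ → ℂ} {C : ℂ}
    (hC : ∀ y : ℝ, HasSum (fun m : ℤ => c m * exp (m * y * I)) C) (j : ℤ) :
    c j = if j = 0 then C else 0 := by
  have h := integral_mul_exp_neg_eq_two_pi_mul_coeff hC j
  have hexp (y : ℝ) : C * exp (-(j * y * I)) = C * exp ((-j : ℤ) * y * I) := by
    push_cast; ring_nf
  simp_rw [hexp, intervalIntegral.integral_const_mul, integral_exp_int_mul_mul_I, neg_eq_zero] at h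
  have hπ : (2 * π : ℂ) ≠ 0 := by exact_mod_cast Real.two_pi_pos.ne'
  split_ifs at h ⊢
  · exact mul_left_cancel₀ hπ (by rw [← h]; push_cast; ring)
  · simpa [hπ] using h.symm

lemma hasSum_mul_exp_eq_zero_of_forall_real {c : ℤ → ℂ} {α β : ℝ}
    (h : ∀ x : ℝ, α < x → x < β → HasSum (fun m : ℤ => c m * exp (m * x)) 0)
    {s : ℂ} (hs : s.re ∈ Set.Ioo α β) : HasSum (fun m : ℤ => c m * exp (m * s)) 0 := by
  obtain ⟨x₁, hαx₁, hx₁s⟩ := exists_between hs.1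
  obtain ⟨x₂, hsx₂, hx₂β⟩ := exists_between hs.2
  set S : Set ℂ := re ⁻¹' Set.Ioo x₁ x₂
  have hSopen : IsOpen S := isOpen_Ioo.preimage continuous_re
  have hsS : s ∈ S := ⟨hx₁s, hsx₂⟩
  have hnorm (m : ℤ) (z : ℂ) : ‖c m * exp (m * z)‖ = ‖c m‖ * Real.exp (m * z.re) := by
    simp [norm_exp]
  have hsummable {x : ℝ} (h₁ : α < x) (h₂ : x < β) :
      Summable fun m : ℤ => ‖c m‖ * Real.exp (m * x) := by
    have := summable_norm_iff.mpr (h x h₁ h₂).summable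
    simpa only [hnorm, ofReal_re] using this
  have hdom : Summable fun m : ℤ => ‖c m‖ * Real.exp (m * x₁) + ‖c m‖ * Real.exp (m * x₂) :=
    (hsummable hαx₁ (hx₁s.trans hs.2)).add (hsummable (hs.1.trans hsx₂) hx₂β)
  have hbound (m : ℤ) (z : ℂ) (hz : z ∈ S) :
      ‖c m * exp (m * z)‖ ≤ ‖c m‖ * Real.exp (m * x₁) + ‖c m‖ * Real.exp (m * x₂) := by
    rw [hnorm, ← mul_add]
    gcongr
    rcases le_total 0 (m : ℝ) with hm | hm
    · have : Real.exp (m * z.re) ≤ Real.exp (m * x₂) := by gcongr; exact hz.2.le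
      linarith [Real.exp_pos (m * x₁)]
    · have : Real.exp (m * z.re) ≤ Real.exp (m * x₁) :=
        Real.exp_le_exp.mpr (mul_le_mul_of_nonpos_left hz.1.le hm)
      linarith [Real.exp_pos (m * x₂)]
  set H : ℂ → ℂ := fun z => ∑' m : ℤ, c m * exp (m * z)
  have hH : AnalyticOnNhd ℂ H S :=
    (differentiableOn_tsum_of_summable_norm hdom (fun m => by fun_prop) hSopen hbound).analyticOnNhd
      hSopen
  have hS : IsPreconnected S :=
    ((convex_Ioo x₁ x₂).linear_preimage reLm).isPreconnected
  have hH_real : ∀ᶠ x : ℝ in 𝓝 s.re, H x = 0 := by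
    filter_upwards [Ioo_mem_nhds hs.1 hs.2] with x hx
    exact (h x hx.1 hx.2).tsum_eq
  have hofReal : Tendsto ofReal (𝓝[≠] s.re) (𝓝[≠] (s.re : ℂ)) :=
    tendsto_nhdsWithin_of_tendsto_nhds_of_eventually_within _
      ((continuous_ofReal.tendsto _).mono_left nhdsWithin_le_nhds)
      (eventually_nhdsWithin_of_forall fun x hx => by simpa using hx)
  have hH_zero := hH.eqOn_zero_of_preconnected_of_frequently_eq_zero hS
    (show (s.re : ℂ) ∈ S from ⟨by simpa using hx₁s, by simpa using hsx₂⟩)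
    (hofReal.frequently (hH_real.filter_mono nhdsWithin_le_nhds).frequently)
  have hsum_s : Summable fun m : ℤ => c m * exp (m * s) :=
    .of_norm_bounded hdom fun m => hbound m s hsS
  exact hsum_s.hasSum_iff.mpr (hH_zero hsS)

lemma hasSum_mul_of_hasSum_zpow_of_hasSum_inv_zpow {u v : ℤ → ℂ} {w U V : ℂ} (hw : w ≠ 0)
    (hU : HasSum (fun n : ℤ => u n * w ^ n) U) (hV : HasSum (fun m : ℤ => v m * w⁻¹ ^ m) V) :
    HasSum (fun k : ℤ => (∑' m : ℤ, u (k + m) * v m) * w ^ k) (U * V) := by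
  have hprod : HasSum (fun p : ℤ × ℤ => u p.1 * w ^ p.1 * (v p.2 * w⁻¹ ^ p.2)) (U * V) :=
    HasSum.mul (f := fun n => u n * w ^ n) (g := fun m => v m * w⁻¹ ^ m) hU hV
      (summable_mul_of_summable_norm (f := fun n => u n * w ^ n) (g := fun m => v m * w⁻¹ ^ m)
        (summable_norm_iff.mpr hU.summable) (summable_norm_iff.mpr hV.summable))
  let shear : ℤ × ℤ ≃ ℤ × ℤ :=
    { toFun := fun q => (q.1 + q.2, q.2), invFun := fun p => (p.1 - p.2, p.2),
      left_inv := fun q => by simp, right_inv := fun p => by simp }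
  have hterm (k m : ℤ) : u (k + m) * w ^ (k + m) * (v m * w⁻¹ ^ m) = u (k + m) * v m * w ^ k := by
    rw [zpow_add₀ hw, inv_zpow]
    field_simp
  have hsheared : HasSum (fun q : ℤ × ℤ => u (q.1 + q.2) * v q.2 * w ^ q.1) (U * V) := by
    convert shear.hasSum_iff.mpr hprod using 1
    exact funext fun q => (hterm q.1 q.2).symm
  refine hsheared.prod_fiberwise fun k => ?_
  simpa only [tsum_mul_right] using (hsheared.summable.prod_factor k).hasSum

lemma summable_mul_shift {u v : ℤ → ℂ} (hu : Summable u) (hv : Summable v) (k : ℤ) :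
    Summable fun m : ℤ => u (k + m) * v m :=
  (summable_mul_of_summable_norm (f := u) (g := v) (summable_norm_iff.mpr hu)
    (summable_norm_iff.mpr hv)).comp_injective (i := fun m : ℤ => (k + m, m))
    fun _ _ h => (Prod.ext_iff.mp h).2

lemma eq_zero_of_hasSum_mul_zpow_eq_zero {c : ℤ → ℂ} {A B : ℝ} (hA : 0 < A) (hAB : A < B)
    (h : ∀ t : ℝ, A < t → t < B → HasSum (fun m : ℤ => c m * (t : ℂ) ^ m) 0) (m : ℤ) :
    c m = 0 := by
  have hexp (x : ℝ) (h₁ : Real.log A < x) (h₂ : x < Real.log B) :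
      HasSum (fun m : ℤ => c m * exp (m * x)) 0 := by
    simpa [ofReal_exp, ← exp_int_mul] using
      h (Real.exp x) ((Real.log_lt_iff_lt_exp hA).mp h₁)
        ((Real.lt_log_iff_exp_lt (hA.trans hAB)).mp h₂)
  obtain ⟨x₀, h₁, h₂⟩ := exists_between (Real.log_lt_log hA hAB)
  have hline (y : ℝ) : HasSum (fun m : ℤ => c m * exp (m * x₀) * exp (m * y * I)) 0 := by
    convert hasSum_mul_exp_eq_zero_of_forall_real hexp (s := x₀ + y * I) (by simpa using ⟨h₁, h₂⟩)
      using 2 with m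
    rw [mul_assoc, ← exp_add]
    ring_nf
  simpa [exp_ne_zero] using coeff_eq_ite_of_forall_hasSum_mul_exp_mul_I hline m

lemma hasSum_mul_conj_mul_sq_zpow_eq_zero {ρ : ℝ} (hρ : 0 < ρ) {a b : ℤ → ℂ} {φ ψ : ℂ → ℂ}
    (ha : ∀ z : ℂ, ‖z‖ = ρ → HasSum (fun n : ℤ => a n * z ^ n) (φ z))
    (hb : ∀ z : ℂ, ‖z‖ = ρ → HasSum (fun m : ℤ => b m * z ^ m) (ψ z))
    (hconst : ∀ z : ℂ, ‖z‖ = ρ → conj (ψ z) * φ z = conj (ψ ρ) * φ ρ)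
    {k : ℤ} (hk : k ≠ 0) :
    HasSum (fun m : ℤ => a (k + m) * conj (b m) * ((ρ ^ 2 : ℝ) : ℂ) ^ m) 0 := by
  set u : ℤ → ℂ := fun n => a n * (ρ : ℂ) ^ n
  set v : ℤ → ℂ := fun m => conj (b m) * (ρ : ℂ) ^ m
  have hρ' : (ρ : ℂ) ≠ 0 := ofReal_ne_zero.mpr hρ.ne'
  have hnorm (y : ℝ) : ‖(ρ : ℂ) * exp (y * I)‖ = ρ := by
    simp [norm_exp_ofReal_mul_I, hρ.le]
  have hU (y : ℝ) : HasSum (fun n : ℤ => u n * exp (y * I) ^ n) (φ (ρ * exp (y * I))) := by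
    simpa [u, mul_zpow, mul_assoc] using ha _ (hnorm y)
  have hV (y : ℝ) :
      HasSum (fun m : ℤ => v m * (exp (y * I))⁻¹ ^ m) (conj (ψ (ρ * exp (y * I)))) := by
    have hw : conj (exp (y * I)) = (exp (y * I))⁻¹ := by
      rw [← exp_conj, ← exp_neg]; simp
    simpa [v, mul_zpow, mul_assoc, hw, map_zpow₀] using hasSum_conj'.mpr (hb _ (hnorm y))
  have hcircle (y : ℝ) :
      HasSum (fun j : ℤ => (∑' m : ℤ, u (j + m) * v m) * exp (j * y * I)) (conj (ψ ρ) * φ ρ) := by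
    have := hasSum_mul_of_hasSum_zpow_of_hasSum_inv_zpow (exp_ne_zero _) (hU y) (hV y)
    rw [mul_comm (φ _), hconst _ (hnorm y)] at this
    simpa [← exp_int_mul, mul_assoc] using this
  have hshift : HasSum (fun m : ℤ => u (k + m) * v m) 0 := by
    have hk_coeff := coeff_eq_ite_of_forall_hasSum_mul_exp_mul_I hcircle k
    rw [if_neg hk] at hk_coeff
    rw [← hk_coeff]
    exact (summable_mul_shift (by simpa using (hU 0).summable)
      (by simpa using (hV 0).summable) k).hasSum
  have hfactor (m : ℤ) :
      u (k + m) * v m = (ρ : ℂ) ^ k * (a (k + m) * conj (b m) * ((ρ ^ 2 : ℝ) : ℂ) ^ m) := by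
    simp only [u, v]
    push_cast
    rw [zpow_add₀ hρ', sq, mul_zpow]
    ring
  simp only [hfactor] at hshift
  exact (hasSum_mul_left_iff (zpow_ne_zero k hρ')).mp (by simpa using hshift)

/-- If `φ'` and `ψ'` have Laurent expansions `∑ aₙ zⁿ`, `∑ b_m z^m` on the
annulus `{r < |z| < R}` and `z ↦ conj (ψ' z) * φ' z` is radial, then
`aₙ * conj (b_m) = 0` whenever `n ≠ m`. -/
theorem hankel_stmt2 (r R : ℝ) (hr : 0 < r) (hrR : r < R)
    (a b : ℤ → ℂ) (φ' ψ' : ℂ → ℂ)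
    (ha : ∀ z : ℂ, r < ‖z‖ → ‖z‖ < R →
      HasSum (fun n : ℤ => a n * z ^ n) (φ' z))
    (hb : ∀ z : ℂ, r < ‖z‖ → ‖z‖ < R →
      HasSum (fun m : ℤ => b m * z ^ m) (ψ' z))
    (hradial : ∀ z w : ℂ, r < ‖z‖ → ‖z‖ < R →
      r < ‖w‖ → ‖w‖ < R → ‖z‖ = ‖w‖ →
      (starRingEnd ℂ) (ψ' z) * φ' z = (starRingEnd ℂ) (ψ' w) * φ' w) :
    ∀ n m : ℤ, n ≠ m → a n * (starRingEnd ℂ) (b m) = 0 := by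
  intro n m hnm
  have hcorr (t : ℝ) (ht₁ : r ^ 2 < t) (ht₂ : t < R ^ 2) :
      HasSum (fun j : ℤ => a (n - m + j) * starRingEnd ℂ (b j) * (t : ℂ) ^ j) 0 := by
    have hρ : r < √t ∧ √t < R :=
      ⟨Real.lt_sqrt_of_sq_lt ht₁, (Real.sqrt_lt' (hr.trans hrR)).mpr ht₂⟩
    have hsphere {z : ℂ} (hz : ‖z‖ = √t) : r < ‖z‖ ∧ ‖z‖ < R := hz ▸ hρ
    have hρnorm : ‖((√t : ℝ) : ℂ)‖ = √t := by simp
    have := hasSum_mul_conj_mul_sq_zpow_eq_zero (hr.trans hρ.1)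
      (fun z hz => ha z (hsphere hz).1 (hsphere hz).2)
      (fun z hz => hb z (hsphere hz).1 (hsphere hz).2)
      (fun z hz => hradial z _ (hsphere hz).1 (hsphere hz).2 (hsphere hρnorm).1
        (hsphere hρnorm).2 (hz.trans hρnorm.symm))
      (sub_ne_zero.mpr hnm)
    rwa [Real.sq_sqrt ((pow_pos hr 2).trans ht₁).le] at this
  simpa using eq_zero_of_hasSum_mul_zpow_eq_zero (pow_pos hr 2) (by gcongr) hcorr m
end

section
/- Let φ and ψ be holomorphic functions on an annulus A = {z : r < |z| < R} such that the product conj(ψ')·φ' of their derivatives is a radial function on A. Then either there exist an integer m and constants a, b ∈ ℂ with φ(z) = a·zᵐ + c₁ and ψ(z) = b·zᵐ + c₂ (for constants c₁, c₂), or at least one of φ, ψ is constant. -/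
/-!
Write `f = φ'` and `g = ψ'`. Differentiating the radial function `conj (g z) * f z` along the
circle through `z` gives `z f' · conj g = f · conj (z g')`. Near a point where `f g ≠ 0` this says
that the holomorphic function `z f' / f` equals the antiholomorphic function `conj (z g' / g)`, so
both are constant, and by the identity theorem `z f' = μ f`, `z g' = conj μ · g` on the whole
annulus. Following `f` once around a circle forces `e^{2πiμ} = 1`, i.e. `μ = m ∈ ℤ`; hence
`f = a z^m`, `g = b z^m`, and `m ≠ -1` because `a / z` has no primitive on a circle around `0`
unless `a = 0`. Integrating gives the claim.
-/

open Complex ComplexConjugate Filter Metric Set Topology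

lemma isOpen_annulus (r R : ℝ) : IsOpen {z : ℂ | r < ‖z‖ ∧ ‖z‖ < R} :=
  (isOpen_lt continuous_const continuous_norm).inter (isOpen_lt continuous_norm continuous_const)

lemma isPreconnected_annulus {r : ℝ} (hr : 0 ≤ r) (R : ℝ) :
    IsPreconnected {z : ℂ | r < ‖z‖ ∧ ‖z‖ < R} := by
  have hpolar : {z : ℂ | r < ‖z‖ ∧ ‖z‖ < R} =
      (fun p : ℝ × ℝ => (p.1 : ℂ) * exp (p.2 * I)) '' (Ioo r R ×ˢ univ) := by
    ext z
    refine ⟨fun hz => ⟨(‖z‖, z.arg), ⟨hz, trivial⟩, norm_mul_exp_arg_mul_I z⟩, ?_⟩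
    rintro ⟨⟨ρ, θ⟩, ⟨hρ, -⟩, rfl⟩
    simpa [abs_of_pos (hr.trans_lt hρ.1)] using hρ
  rw [hpolar]
  exact (isPreconnected_Ioo.prod isPreconnected_univ).image _ (by fun_prop)

lemma hasDerivAt_comp_mul_exp_mul_I {f : ℂ → ℂ} {z₀ : ℂ} {t : ℝ}
    (hf : DifferentiableAt ℂ f (z₀ * exp (t * I))) :
    HasDerivAt (fun s : ℝ => f (z₀ * exp (s * I)))
      (I * (z₀ * exp (t * I) * deriv f (z₀ * exp (t * I)))) t := by
  have hp : HasDerivAt (fun s : ℝ => z₀ * exp (s * I)) (z₀ * (exp (t * I) * I)) t := by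
    simpa using ((hasDerivAt_id t).ofReal_comp.mul_const I).cexp.const_mul z₀
  exact (hf.hasDerivAt.comp t hp).congr_deriv (by ring)

lemma mul_deriv_mul_conj_eq_of_radial {f g : ℂ → ℂ} {z : ℂ} (hf : DifferentiableAt ℂ f z)
    (hg : DifferentiableAt ℂ g z) (h : ∀ w, ‖w‖ = ‖z‖ → conj (g w) * f w = conj (g z) * f z) :
    z * deriv f z * conj (g z) = f z * conj (z * deriv g z) := by
  have hF := (hasDerivAt_comp_mul_exp_mul_I (t := 0) (by simpa using hg)).star.mul
    (hasDerivAt_comp_mul_exp_mul_I (t := 0) (by simpa using hf))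
  have hconst : HasDerivAt (fun s : ℝ => star (g (z * exp (s * I))) * f (z * exp (s * I))) 0 0 :=
    (hasDerivAt_const _ (conj (g z) * f z)).congr_of_eventuallyEq
      (Eventually.of_forall fun s => h _ (by simp [norm_exp_ofReal_mul_I]))
  have h0 := hF.unique hconst
  simp only [ofReal_zero, zero_mul, exp_zero, mul_one, star_mul', star_def, conj_I, map_mul]
    at h0 ⊢
  linear_combination (-I) * h0 +
    (z * deriv f z * conj (g z) - f z * conj z * conj (deriv g z)) * I_sq

lemma hasDerivAt_eq_zero_of_eventuallyEq_conj {u v : ℂ → ℂ} {a b z : ℂ} (hu : HasDerivAt u a z)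
    (hv : HasDerivAt v b z) (huv : u =ᶠ[𝓝 z] fun w => conj (v w)) : a = 0 := by
  -- along `t ↦ z + t c` the two sides have derivatives `a c` and `conj (b c)`; take `c = 1, I`
  have hline : ∀ c : ℂ, a * c = conj (b * c) := by
    intro c
    have hp : HasDerivAt (fun t : ℝ => z + t * c) c 0 := by
      simpa using ((hasDerivAt_id (0 : ℝ)).ofReal_comp.mul_const c).const_add z
    have hz : z = z + ((0 : ℝ) : ℂ) * c := by simp
    have htend : Tendsto (fun t : ℝ => z + t * c) (𝓝 0) (𝓝 z) := by
      simpa using hp.continuousAt.tendsto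
    exact (hu.comp_of_eq 0 hp hz).unique
      (((hv.comp_of_eq 0 hp hz).star).congr_of_eventuallyEq (htend.eventually huv))
  have h1 := hline 1
  have hI := hline I
  simp only [mul_one, map_mul, conj_I] at h1 hI
  linear_combination (1 / 2 : ℂ) * h1 - (I / 2) * hI + (a + conj b) / 2 * I_sq

lemma IsOpen.exists_is_const_of_eqOn_conj {U : Set ℂ} (hU : IsOpen U) (hUc : IsPreconnected U)
    {u v : ℂ → ℂ} (hu : DifferentiableOn ℂ u U) (hv : DifferentiableOn ℂ v U)
    (huv : EqOn u (fun w => conj (v w)) U) : ∃ μ, ∀ z ∈ U, u z = μ :=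
  hU.exists_is_const_of_deriv_eq_zero hUc hu fun _ hz =>
    hasDerivAt_eq_zero_of_eventuallyEq_conj (hu.differentiableAt (hU.mem_nhds hz)).hasDerivAt
      (hv.differentiableAt (hU.mem_nhds hz)).hasDerivAt (eventuallyEq_of_mem (hU.mem_nhds hz) huv)

lemma AnalyticOnNhd.exists_ne_zero_and_ne_zero {𝕜 E F G : Type*} [NontriviallyNormedField 𝕜]
    [NormedAddCommGroup E] [NormedSpace 𝕜 E] [NormedAddCommGroup F] [NormedSpace 𝕜 F]
    [NormedAddCommGroup G] [NormedSpace 𝕜 G] {U : Set E} {f : E → F} {g : E → G}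
    (hf : AnalyticOnNhd 𝕜 f U) (hg : AnalyticOnNhd 𝕜 g U) (hU : IsOpen U) (hUc : IsPreconnected U)
    (hf0 : ¬EqOn f 0 U) (hg0 : ¬EqOn g 0 U) : ∃ z ∈ U, f z ≠ 0 ∧ g z ≠ 0 := by
  by_contra! h
  obtain ⟨z₁, hz₁, hfz₁⟩ : ∃ z ∈ U, f z ≠ 0 := by simpa [EqOn] using hf0
  refine hg0 (hg.eqOn_zero_of_preconnected_of_eventuallyEq_zero hUc hz₁ ?_)
  filter_upwards [hU.mem_nhds hz₁, (hf z₁ hz₁).continuousAt.eventually_ne hfz₁] using h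

lemma IsOpen.exists_eqOn_mul_of_mul_conj_eq {U : Set ℂ} (hU : IsOpen U) (hUc : IsPreconnected U)
    {f g p q : ℂ → ℂ} (hf : AnalyticOnNhd ℂ f U) (hg : AnalyticOnNhd ℂ g U)
    (hp : AnalyticOnNhd ℂ p U) (hq : AnalyticOnNhd ℂ q U) {z₀ : ℂ} (hz₀ : z₀ ∈ U)
    (hf₀ : f z₀ ≠ 0) (hg₀ : g z₀ ≠ 0) (h : ∀ z ∈ U, p z * conj (g z) = f z * conj (q z)) :
    ∃ μ, EqOn p (fun z => μ * f z) U ∧ EqOn q (fun z => conj μ * g z) U := by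
  obtain ⟨ε, hε, hball⟩ : ∃ ε > 0, ball z₀ ε ⊆ U ∩ {z | f z ≠ 0 ∧ g z ≠ 0} :=
    Metric.mem_nhds_iff.mp <| inter_mem (hU.mem_nhds hz₀)
      (((hf z₀ hz₀).continuousAt.eventually_ne hf₀).and
        ((hg z₀ hz₀).continuousAt.eventually_ne hg₀))
  have hdiff : ∀ {k l : ℂ → ℂ}, AnalyticOnNhd ℂ k U → AnalyticOnNhd ℂ l U →
      (∀ z ∈ ball z₀ ε, l z ≠ 0) → DifferentiableOn ℂ (fun z => k z / l z) (ball z₀ ε) :=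
    fun hk hl hl0 => (hk.differentiableOn.mono fun z hz => (hball hz).1).div
      (hl.differentiableOn.mono fun z hz => (hball hz).1) hl0
  have hconj : EqOn (fun z => p z / f z) (fun z => conj (q z / g z)) (ball z₀ ε) := by
    intro z hz
    obtain ⟨hzU, hfz, hgz⟩ := hball hz
    change p z / f z = conj (q z / g z)
    rw [map_div₀, div_eq_div_iff hfz ((map_ne_zero _).2 hgz)]
    linear_combination h z hzU
  obtain ⟨μ, hμ⟩ := isOpen_ball.exists_is_const_of_eqOn_conj (convex_ball z₀ ε).isPreconnected
    (hdiff hp hf fun z hz => (hball hz).2.1) (hdiff hq hg fun z hz => (hball hz).2.2) hconj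
  have hnear : ∀ z ∈ ball z₀ ε, p z = μ * f z ∧ q z = conj μ * g z := by
    intro z hz
    obtain ⟨-, hfz, hgz⟩ := hball hz
    have hpf : p z / f z = μ := hμ z hz
    have hqg : q z / g z = conj μ := by rw [← hpf, show p z / f z = _ from hconj hz, conj_conj]
    exact ⟨(div_eq_iff hfz).1 hpf, (div_eq_iff hgz).1 hqg⟩
  refine ⟨μ, hp.eqOn_of_preconnected_of_eventuallyEq (analyticOnNhd_const.mul hf) hUc hz₀ ?_,
    hq.eqOn_of_preconnected_of_eventuallyEq (analyticOnNhd_const.mul hg) hUc hz₀ ?_⟩ <;>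
  filter_upwards [ball_mem_nhds z₀ hε] with z hz
  exacts [(hnear z hz).1, (hnear z hz).2]

lemma norm_mul_exp_ofReal_mul_I (z : ℂ) (t : ℝ) : ‖z * exp (t * I)‖ = ‖z‖ := by
  rw [norm_mul, norm_exp_ofReal_mul_I, mul_one]

lemma exists_intCast_eq_of_mul_deriv_eq {f : ℂ → ℂ} {μ z₀ : ℂ}
    (hf : ∀ w, ‖w‖ = ‖z₀‖ → DifferentiableAt ℂ f w)
    (hμ : ∀ w, ‖w‖ = ‖z₀‖ → w * deriv f w = μ * f w) (h₀ : f z₀ ≠ 0) : ∃ m : ℤ, μ = m := by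
  have hderiv : ∀ t : ℝ,
      HasDerivAt (fun s : ℝ => f (z₀ * exp (s * I)) * exp (-(μ * s * I))) 0 t := fun t => by
    have hw := norm_mul_exp_ofReal_mul_I z₀ t
    refine ((hasDerivAt_comp_mul_exp_mul_I (hf _ hw)).mul
      (((hasDerivAt_id t).ofReal_comp.const_mul μ).mul_const I).neg.cexp).congr_deriv ?_
    rw [hμ _ hw]
    simp only [Pi.neg_apply, id, ofReal_one]
    ring
  have hperiod := is_const_of_deriv_eq_zero (fun t => (hderiv t).differentiableAt)
    (fun t => (hderiv t).deriv) (2 * Real.pi) 0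
  push_cast at hperiod
  simp only [exp_two_pi_mul_I, mul_one, zero_mul, mul_zero, neg_zero, exp_zero] at hperiod
  obtain ⟨n, hn⟩ := exp_eq_one_iff.mp (mul_left_cancel₀ h₀ (hperiod.trans (mul_one _).symm))
  have h2πI : (2 * Real.pi * I : ℂ) ≠ 0 := by simp [Real.pi_ne_zero, I_ne_zero]
  refine ⟨-n, mul_right_cancel₀ h2πI ?_⟩
  push_cast
  linear_combination -hn

lemma eq_zero_of_mul_deriv_eq_const {φ : ℂ → ℂ} {a z₀ : ℂ}
    (hφ : ∀ w, ‖w‖ = ‖z₀‖ → DifferentiableAt ℂ φ w) (ha : ∀ w, ‖w‖ = ‖z₀‖ → w * deriv φ w = a) :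
    a = 0 := by
  have hderiv : ∀ t : ℝ, HasDerivAt (fun s : ℝ => φ (z₀ * exp (s * I)) - I * a * s) 0 t :=
    fun t => by
      have hw := norm_mul_exp_ofReal_mul_I z₀ t
      refine ((hasDerivAt_comp_mul_exp_mul_I (hφ _ hw)).sub
        ((hasDerivAt_id t).ofReal_comp.const_mul (I * a))).congr_deriv ?_
      rw [ha _ hw, ofReal_one]
      ring
  have hperiod := is_const_of_deriv_eq_zero (fun t => (hderiv t).differentiableAt)
    (fun t => (hderiv t).deriv) (2 * Real.pi) 0
  push_cast at hperiod
  rw [exp_two_pi_mul_I] at hperiod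
  simpa [I_ne_zero, Real.pi_ne_zero] using hperiod

lemma IsOpen.exists_eq_mul_zpow_of_mul_deriv_eq {U : Set ℂ} (hU : IsOpen U)
    (hUc : IsPreconnected U) (h0 : (0 : ℂ) ∉ U) {f : ℂ → ℂ} (hf : DifferentiableOn ℂ f U)
    {m : ℤ} (hm : ∀ z ∈ U, z * deriv f z = m * f z) : ∃ a, ∀ z ∈ U, f z = a * z ^ m := by
  have hne : ∀ z ∈ U, z ≠ 0 := fun z hz h => h0 (h ▸ hz)
  have hderiv : ∀ z ∈ U, HasDerivAt (fun z => f z * z ^ (-m)) 0 z := fun z hz => by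
    refine ((hf.differentiableAt (hU.mem_nhds hz)).hasDerivAt.mul
      (hasDerivAt_zpow (-m) z (Or.inl (hne z hz)))).congr_deriv ?_
    have hsplit : z ^ (-m) = z * z ^ (-m - 1) := by
      rw [← zpow_one_add₀ (hne z hz)]; ring_nf
    rw [hsplit]
    push_cast
    linear_combination z ^ (-m - 1) * hm z hz
  obtain ⟨a, ha⟩ := hU.exists_is_const_of_deriv_eq_zero hUc
    (fun z hz => (hderiv z hz).differentiableAt.differentiableWithinAt)
    (fun z hz => (hderiv z hz).deriv)
  refine ⟨a, fun z hz => ?_⟩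
  rw [← ha z hz, mul_assoc, ← zpow_add₀ (hne z hz), neg_add_cancel, zpow_zero, mul_one]

lemma IsOpen.exists_eq_add_of_hasDerivAt_mul_zpow {U : Set ℂ} (hU : IsOpen U)
    (hUc : IsPreconnected U) (h0 : (0 : ℂ) ∉ U) {F : ℂ → ℂ} {c : ℂ} {m : ℤ} (hm : m ≠ -1)
    (hF : ∀ z ∈ U, HasDerivAt F (c * z ^ m) z) :
    ∃ C, ∀ z ∈ U, F z = c / (m + 1) * z ^ (m + 1) + C := by
  have hne : ∀ z ∈ U, z ≠ 0 := fun z hz h => h0 (h ▸ hz)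
  have hm1 : (m + 1 : ℂ) ≠ 0 := by exact_mod_cast (by omega : m + 1 ≠ 0)
  have hprim : ∀ z ∈ U, HasDerivAt (fun z => c / (m + 1) * z ^ (m + 1)) (c * z ^ m) z :=
    fun z hz => by
      refine ((hasDerivAt_zpow (m + 1) z (Or.inl (hne z hz))).const_mul _).congr_deriv ?_
      rw [add_sub_cancel_right]
      push_cast
      field_simp
  obtain ⟨C, hC⟩ := hU.exists_eq_add_of_deriv_eq hUc
    (fun z hz => (hF z hz).differentiableAt.differentiableWithinAt)
    (fun z hz => (hprim z hz).differentiableAt.differentiableWithinAt)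
    (fun z hz => (hF z hz).deriv.trans (hprim z hz).deriv.symm)
  exact ⟨C, fun z hz => hC hz⟩

theorem hankel_stmt3_general (r R : ℝ) (hr : 0 < r)
    (A : Set ℂ) (hA : A = {z : ℂ | r < ‖z‖ ∧ ‖z‖ < R})
    (φ ψ : ℂ → ℂ) (hφ : DifferentiableOn ℂ φ A) (hψ : DifferentiableOn ℂ ψ A)
    (hradial : ∀ z w, z ∈ A → w ∈ A → ‖z‖ = ‖w‖ →
      (starRingEnd ℂ) (deriv ψ z) * deriv φ z =
        (starRingEnd ℂ) (deriv ψ w) * deriv φ w) :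
    (∃ (m : ℤ) (a b c₁ c₂ : ℂ), ∀ z ∈ A, φ z = a * z ^ m + c₁ ∧ ψ z = b * z ^ m + c₂) ∨
      (∃ c : ℂ, ∀ z ∈ A, φ z = c) ∨ (∃ c : ℂ, ∀ z ∈ A, ψ z = c) := by
  have hAo : IsOpen A := hA ▸ isOpen_annulus r R
  have hAc : IsPreconnected A := hA ▸ isPreconnected_annulus hr.le R
  have h0 : (0 : ℂ) ∉ A := fun h => by rw [hA] at h; exact hr.not_ge (by simpa using h.1.le)
  have hcircle : ∀ z ∈ A, ∀ w, ‖w‖ = ‖z‖ → w ∈ A := by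
    intro z hz w hw
    rw [hA] at hz ⊢
    simpa only [mem_ofPred, hw] using hz
  by_cases hφ' : EqOn (deriv φ) 0 A
  · exact Or.inr (Or.inl (hAo.exists_is_const_of_deriv_eq_zero hAc hφ hφ'))
  by_cases hψ' : EqOn (deriv ψ) 0 A
  · exact Or.inr (Or.inr (hAo.exists_is_const_of_deriv_eq_zero hAc hψ hψ'))
  left
  have hf := (hφ.analyticOnNhd hAo).deriv
  have hg := (hψ.analyticOnNhd hAo).deriv
  obtain ⟨z₀, hz₀, hf₀, hg₀⟩ := hf.exists_ne_zero_and_ne_zero hg hAo hAc hφ' hψ'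
  obtain ⟨μ, hfμ, hgμ⟩ := hAo.exists_eqOn_mul_of_mul_conj_eq hAc hf hg
    (analyticOnNhd_id.mul hf.deriv) (analyticOnNhd_id.mul hg.deriv) hz₀ hf₀ hg₀ fun z hz =>
      mul_deriv_mul_conj_eq_of_radial (hf z hz).differentiableAt (hg z hz).differentiableAt
        fun w hw => hradial w z (hcircle z hz w hw) hz hw
  obtain ⟨m, rfl⟩ := exists_intCast_eq_of_mul_deriv_eq
    (fun w hw => (hf w (hcircle z₀ hz₀ w hw)).differentiableAt)
    (fun w hw => hfμ (hcircle z₀ hz₀ w hw)) hf₀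
  rw [map_intCast] at hgμ
  obtain ⟨a, ha⟩ := hAo.exists_eq_mul_zpow_of_mul_deriv_eq hAc h0 hf.differentiableOn hfμ
  obtain ⟨b, hb⟩ := hAo.exists_eq_mul_zpow_of_mul_deriv_eq hAc h0 hg.differentiableOn hgμ
  have hm : m ≠ -1 := by
    rintro rfl
    have ha0 : a = 0 := eq_zero_of_mul_deriv_eq_const (z₀ := z₀)
      (fun w hw => hφ.differentiableAt (hAo.mem_nhds (hcircle z₀ hz₀ w hw)))
      fun w hw => by
        have hwA := hcircle z₀ hz₀ w hw
        rw [ha w hwA, zpow_neg_one]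
        field_simp [ne_of_mem_of_not_mem hwA h0]
    exact hf₀ (by rw [ha z₀ hz₀, ha0, zero_mul])
  obtain ⟨c₁, hc₁⟩ := hAo.exists_eq_add_of_hasDerivAt_mul_zpow hAc h0 hm fun z hz =>
    ha z hz ▸ (hφ.differentiableAt (hAo.mem_nhds hz)).hasDerivAt
  obtain ⟨c₂, hc₂⟩ := hAo.exists_eq_add_of_hasDerivAt_mul_zpow hAc h0 hm fun z hz =>
    hb z hz ▸ (hψ.differentiableAt (hAo.mem_nhds hz)).hasDerivAt
  exact ⟨m + 1, _, _, c₁, c₂, fun z hz => ⟨hc₁ z hz, hc₂ z hz⟩⟩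

/-- If `φ, ψ` are holomorphic on the annulus `A = {r < |z| < R}` and
`conj (ψ') * φ'` is radial on `A`, then either both are of the form
`a z^m + c` with the same `m`, or one of them is constant. -/
theorem hankel_stmt3 (r R : ℝ) (hr : 0 < r) (hrR : r < R)
    (A : Set ℂ) (hA : A = {z : ℂ | r < ‖z‖ ∧ ‖z‖ < R})
    (φ ψ : ℂ → ℂ) (hφ : DifferentiableOn ℂ φ A) (hψ : DifferentiableOn ℂ ψ A)
    (hradial : ∀ z w, z ∈ A → w ∈ A → ‖z‖ = ‖w‖ →
      (starRingEnd ℂ) (deriv ψ z) * deriv φ z =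
        (starRingEnd ℂ) (deriv ψ w) * deriv φ w) :
    (∃ (m : ℤ) (a b c₁ c₂ : ℂ), ∀ z ∈ A, φ z = a * z ^ m + c₁ ∧ ψ z = b * z ^ m + c₂) ∨
      (∃ c : ℂ, ∀ z ∈ A, φ z = c) ∨ (∃ c : ℂ, ∀ z ∈ A, ψ z = c) :=
  hankel_stmt3_general r R hr A hA φ ψ hφ hψ hradial
end

section
/- For 0 < ξ < 1 and a positive integer m, suppose that for all integers l with l ≠ 0 and l ≠ m the identity (l² − m²)/l² = (1 − ξ^{l+m})(1 − ξ^{l−m})/(1 − ξ^l)² holds. Then this leads to a contradiction; i.e., there is no ξ ∈ (0,1) and positive integer m for which this identity holds for all such l. -/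
/-!
Put `q = ξ ^ m` and `b n = (1 - q ^ (n + 1)) / (n + 1)`. At `l = (n + 2) m` the identity reads
`b (n + 2) * b n = b (n + 1) ^ 2`, so `b` is geometric: `b n = (1 - q) * r ^ n`. Hence
`(n + 1) * r ^ n = 1 + q + ⋯ + q ^ n` stays in `[1, 1 / (1 - q)]`, which is impossible, since
`(n + 1) * r ^ n` tends to `0` if `r < 1` and to `∞` if `r ≥ 1`.
-/

open Filter Topology

theorem eq_mul_div_pow_of_mul_eq_sq {b : ℕ → ℝ} (hb : ∀ n, b n ≠ 0)
    (h : ∀ n, b (n + 2) * b n = b (n + 1) ^ 2) (n : ℕ) : b n = b 0 * (b 1 / b 0) ^ n := by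
  have ratio : ∀ n, b (n + 1) / b n = b 1 / b 0 := by
    intro n
    induction n with
    | zero => rfl
    | succ n ih => rw [← ih, div_eq_div_iff (hb _) (hb _), ← sq, ← h]
  induction n with
  | zero => simp
  | succ n ih => rw [pow_succ, ← mul_assoc, ← ih, ← ratio n, mul_div_cancel₀ _ (hb n)]

theorem not_eventually_succ_mul_pow_mem_Icc {r δ C : ℝ} (hr : 0 ≤ r) (hδ : 0 < δ) :
    ¬ ∀ᶠ n : ℕ in atTop, ((n : ℝ) + 1) * r ^ n ∈ Set.Icc δ C := by
  intro hbdd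
  rcases lt_or_ge r 1 with hr1 | hr1
  · have hlim : Tendsto (fun n : ℕ ↦ ((n : ℝ) + 1) * r ^ n) atTop (𝓝 0) := by
      simpa [add_mul] using (tendsto_self_mul_const_pow_of_lt_one hr hr1).add
        (tendsto_pow_atTop_nhds_zero_of_lt_one hr hr1)
    obtain ⟨n, hn, hsmall⟩ := (hbdd.and (hlim.eventually (gt_mem_nhds hδ))).exists
    exact hsmall.not_ge hn.1
  · have hlarge : Tendsto (fun n : ℕ ↦ ((n : ℝ) + 1) * r ^ n) atTop atTop :=
      tendsto_atTop_mono (fun n ↦ le_mul_of_one_le_right (by positivity) (one_le_pow₀ hr1))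
        (tendsto_atTop_add_const_right _ 1 tendsto_natCast_atTop_atTop)
    obtain ⟨n, hn, hbig⟩ := (hbdd.and (hlarge.eventually_gt_atTop C)).exists
    exact hbig.not_ge hn.2

noncomputable def oneSubPowDiv (q : ℝ) (n : ℕ) : ℝ := (1 - q ^ (n + 1)) / (n + 1)

theorem oneSubPowDiv_zero (q : ℝ) : oneSubPowDiv q 0 = 1 - q := by simp [oneSubPowDiv]

theorem oneSubPowDiv_pos {q : ℝ} (hq0 : 0 ≤ q) (hq1 : q < 1) (n : ℕ) : 0 < oneSubPowDiv q n :=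
  div_pos (sub_pos.2 (pow_lt_one₀ hq0 hq1 n.succ_ne_zero)) (by positivity)

theorem oneSubPowDiv_mul_eq_sq {q : ℝ} (hq0 : 0 ≤ q) (hq1 : q < 1) (n : ℕ)
    (h : ((n : ℝ) + 1) * (n + 3) / (n + 2) ^ 2 =
      (1 - q ^ (n + 3)) * (1 - q ^ (n + 1)) / (1 - q ^ (n + 2)) ^ 2) :
    oneSubPowDiv q (n + 2) * oneSubPowDiv q n = oneSubPowDiv q (n + 1) ^ 2 := by
  have hq : 1 - q ^ (n + 2) ≠ 0 := (sub_pos.2 (pow_lt_one₀ hq0 hq1 (by omega))).ne'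
  rw [div_eq_div_iff (by positivity) (pow_ne_zero 2 hq)] at h
  unfold oneSubPowDiv
  push_cast
  field_simp
  linear_combination -h

theorem hankel_identity_at_multiple {ξ : ℝ} {m : ℤ} (hm : 1 ≤ m)
    (h : ∀ l : ℤ, l ≠ 0 → l ≠ m →
      ((l : ℝ) ^ 2 - (m : ℝ) ^ 2) / (l : ℝ) ^ 2 =
        (1 - ξ ^ (l + m)) * (1 - ξ ^ (l - m)) / (1 - ξ ^ l) ^ 2) (n : ℕ) :
    ((n : ℝ) + 1) * (n + 3) / (n + 2) ^ 2 =
      (1 - (ξ ^ m) ^ (n + 3)) * (1 - (ξ ^ m) ^ (n + 1)) / (1 - (ξ ^ m) ^ (n + 2)) ^ 2 := by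
  have hl := h (((n + 2 : ℕ) : ℤ) * m) (by positivity) (by push_cast; nlinarith)
  rw [show ((n + 2 : ℕ) : ℤ) * m + m = ((n + 3 : ℕ) : ℤ) * m by push_cast; ring,
    show ((n + 2 : ℕ) : ℤ) * m - m = ((n + 1 : ℕ) : ℤ) * m by push_cast; ring] at hl
  simp only [zpow_mul', zpow_natCast] at hl
  rw [← hl]
  have hm0 : (m : ℝ) ≠ 0 := by positivity
  push_cast
  field_simp
  ring

/-- There is no `ξ ∈ (0,1)` and positive integer `m` such that
`(l² − m²)/l² = (1 − ξ^{l+m})(1 − ξ^{l−m})/(1 − ξ^l)²` for all integers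
`l ∉ {0, m}`. -/
theorem hankel_stmt4 (ξ : ℝ) (hξ0 : 0 < ξ) (hξ1 : ξ < 1) (m : ℤ) (hm : 1 ≤ m)
    (h : ∀ l : ℤ, l ≠ 0 → l ≠ m →
      ((l : ℝ) ^ 2 - (m : ℝ) ^ 2) / (l : ℝ) ^ 2 =
        (1 - ξ ^ (l + m)) * (1 - ξ ^ (l - m)) / (1 - ξ ^ l) ^ 2) :
    False := by
  set q := ξ ^ m
  have hq0 : 0 ≤ q := (zpow_pos hξ0 m).le
  have hq1 : q < 1 := zpow_lt_one₀ hξ0 hξ1 (by omega)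
  have hb := oneSubPowDiv_pos hq0 hq1
  set r := oneSubPowDiv q 1 / oneSubPowDiv q 0
  have hgeom (n : ℕ) : oneSubPowDiv q n = (1 - q) * r ^ n := by
    rw [← oneSubPowDiv_zero]
    exact eq_mul_div_pow_of_mul_eq_sq (fun n ↦ (hb n).ne')
      (fun n ↦ oneSubPowDiv_mul_eq_sq hq0 hq1 n (hankel_identity_at_multiple hm h n)) n
  refine not_eventually_succ_mul_pow_mem_Icc (div_pos (hb 1) (hb 0)).le one_pos
    (Eventually.of_forall fun n ↦ (?_ : _ ∈ Set.Icc 1 (1 / (1 - q))))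
  have hsum : ((n : ℝ) + 1) * r ^ n = (1 - q ^ (n + 1)) / (1 - q) := by
    have := hgeom n
    rw [oneSubPowDiv, div_eq_iff (by positivity)] at this
    rw [eq_div_iff (sub_pos.2 hq1).ne', this]
    ring
  have hpow : q ^ (n + 1) ≤ q := pow_le_of_le_one hq0 hq1.le n.succ_ne_zero
  rw [hsum]
  constructor
  · rw [le_div_iff₀ (by linarith)]; linarith
  · gcongr; linarith [pow_nonneg hq0 (n + 1)]
end

section
/- Fix 0 < ξ < 1 and real m > 0. Define f_l(x) = (1 − ξ^{l+x})(1 − ξ^{l−x})/(l² − x²). Then for every δ ∈ (0, m) there exists l₁ > 4m such that for all real l ≥ l₁, f_l is strictly increasing on the interval [δ, m]. -/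
/-! The function `g(t) = (1 - ξ^t) / t` is strictly log-convex for large `t`: with
`φ = log g`, `φ''(t) = 1/t² - (log ξ)² ξ^t / (1 - ξ^t)²`, and `t² ξ^t → 0`. Since
`f_l(x) = g(l + x) g(l - x)`, and for a strictly convex `φ` the symmetric sum
`φ(l + x) + φ(l - x)` strictly increases with `x ≥ 0`, `f_l` is strictly increasing on `[δ, m]`
as soon as `l - m` lies in the region of convexity. -/

open Real Set Filter Topology

theorem StrictConvexOn.map_add_add_map_sub_lt {s : Set ℝ} {φ : ℝ → ℝ}
    (hφ : StrictConvexOn ℝ s φ) {l x y : ℝ} (hx : 0 ≤ x) (hxy : x < y)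
    (hl : l - y ∈ s) (hr : l + y ∈ s) :
    φ (l + x) + φ (l - x) < φ (l + y) + φ (l - y) := by
  have hy : 0 < y := hx.trans_lt hxy
  -- `l ∓ x` are the convex combinations of `l - y` and `l + y` with weights `(y ± x) / 2y`.
  set a := (y + x) / (2 * y)
  set b := (y - x) / (2 * y)
  have ha : 0 < a := by positivity
  have hb : 0 < b := div_pos (by linarith) (by positivity)
  have hab : a + b = 1 := by
    simp only [a, b]; rw [← add_div, div_eq_one_iff_eq (by positivity)]; ring
  have hne : l - y ≠ l + y := by linarith
  have hminus := hφ.2 hl hr hne ha hb hab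
  have hplus := hφ.2 hl hr hne hb ha (by rw [add_comm, hab])
  have hlx : a • (l - y) + b • (l + y) = l - x := by
    simp only [smul_eq_mul, a, b]; field_simp; ring
  have hrx : b • (l - y) + a • (l + y) = l + x := by
    simp only [smul_eq_mul, a, b]; field_simp; ring
  rw [hlx] at hminus
  rw [hrx] at hplus
  simp only [smul_eq_mul] at hminus hplus
  linear_combination hplus + hminus + (φ (l - y) + φ (l + y)) * hab

noncomputable def logOneSubRpowDiv (ξ t : ℝ) : ℝ := log (1 - ξ ^ t) - log t

theorem one_sub_rpow_pos {ξ t : ℝ} (hξ0 : 0 ≤ ξ) (hξ1 : ξ < 1) (ht : 0 < t) :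
    0 < 1 - ξ ^ t :=
  sub_pos.2 (rpow_lt_one hξ0 hξ1 ht)

theorem exp_logOneSubRpowDiv {ξ t : ℝ} (hξ0 : 0 ≤ ξ) (hξ1 : ξ < 1) (ht : 0 < t) :
    exp (logOneSubRpowDiv ξ t) = (1 - ξ ^ t) / t := by
  rw [logOneSubRpowDiv, exp_sub, exp_log (one_sub_rpow_pos hξ0 hξ1 ht), exp_log ht]

theorem one_sub_rpow_mul_one_sub_rpow_div_eq_exp {ξ l x : ℝ} (hξ0 : 0 ≤ ξ) (hξ1 : ξ < 1)
    (hplus : 0 < l + x) (hminus : 0 < l - x) :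
    (1 - ξ ^ (l + x)) * (1 - ξ ^ (l - x)) / (l ^ 2 - x ^ 2) =
      exp (logOneSubRpowDiv ξ (l + x) + logOneSubRpowDiv ξ (l - x)) := by
  rw [exp_add, exp_logOneSubRpowDiv hξ0 hξ1 hplus, exp_logOneSubRpowDiv hξ0 hξ1 hminus,
    div_mul_div_comm]
  ring

theorem hasDerivAt_logOneSubRpowDiv {ξ t : ℝ} (hξ0 : 0 < ξ) (hξ1 : ξ < 1) (ht : 0 < t) :
    HasDerivAt (logOneSubRpowDiv ξ) (-(ξ ^ t * log ξ) / (1 - ξ ^ t) - t⁻¹) t :=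
  (((hasStrictDerivAt_const_rpow hξ0 t).hasDerivAt.const_sub 1).log
    (one_sub_rpow_pos hξ0.le hξ1 ht).ne').sub (hasDerivAt_log ht.ne')

theorem hasDerivAt_deriv_logOneSubRpowDiv {ξ t : ℝ} (hξ0 : 0 < ξ) (hξ1 : ξ < 1) (ht : 0 < t) :
    HasDerivAt (fun t => -(ξ ^ t * log ξ) / (1 - ξ ^ t) - t⁻¹)
      ((t ^ 2)⁻¹ - ξ ^ t * log ξ ^ 2 / (1 - ξ ^ t) ^ 2) t := by
  have hpow := (hasStrictDerivAt_const_rpow hξ0 t).hasDerivAt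
  have hquot := (hpow.mul_const (log ξ)).fun_neg.fun_div (hpow.const_sub 1)
    (one_sub_rpow_pos hξ0.le hξ1 ht).ne'
  refine (hquot.fun_sub (hasDerivAt_inv ht.ne')).congr_deriv ?_
  field_simp
  ring

theorem tendsto_sq_mul_rpow_atTop {ξ : ℝ} (hξ0 : 0 < ξ) (hξ1 : ξ < 1) :
    Tendsto (fun t : ℝ => t ^ 2 * ξ ^ t) atTop (𝓝 0) := by
  refine (tendsto_rpow_mul_exp_neg_mul_atTop_nhds_zero 2 (-log ξ)
    (neg_pos.2 (log_neg hξ0 hξ1))).congr fun t => ?_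
  rw [rpow_two, neg_neg, rpow_def_of_pos hξ0]

theorem eventually_deriv2_logOneSubRpowDiv_pos {ξ : ℝ} (hξ0 : 0 < ξ) (hξ1 : ξ < 1) :
    ∀ᶠ t in atTop, 0 < (t ^ 2)⁻¹ - ξ ^ t * log ξ ^ 2 / (1 - ξ ^ t) ^ 2 := by
  have hlim : Tendsto (fun t : ℝ => t ^ 2 * ξ ^ t * log ξ ^ 2 / (1 - ξ ^ t) ^ 2)
      atTop (𝓝 0) := by
    have hpow := tendsto_rpow_atTop_of_base_lt_one ξ (by linarith) hξ1
    have := ((tendsto_sq_mul_rpow_atTop hξ0 hξ1).mul_const (log ξ ^ 2)).div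
      ((hpow.const_sub 1).pow 2) (by norm_num)
    rwa [zero_mul, zero_div] at this
  filter_upwards [hlim.eventually_lt_const one_pos, eventually_gt_atTop 0] with t hlt ht
  have hden := one_sub_rpow_pos hξ0.le hξ1 ht
  rw [sub_pos, ← one_div, lt_div_iff₀ (by positivity)]
  convert hlt using 1
  ring

theorem eventually_strictConvexOn_logOneSubRpowDiv {ξ : ℝ} (hξ0 : 0 < ξ) (hξ1 : ξ < 1) :
    ∀ᶠ T in atTop, StrictConvexOn ℝ (Ioi T) (logOneSubRpowDiv ξ) := by
  obtain ⟨T₀, hT₀⟩ := ((eventually_deriv2_logOneSubRpowDiv_pos hξ0 hξ1).and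
    (eventually_gt_atTop 0)).exists_forall_of_atTop
  filter_upwards [eventually_ge_atTop T₀] with T hT
  have hpos : ∀ t ∈ Ioi T, 0 < t := fun t ht => (hT₀ t (hT.trans ht.le)).2
  refine StrictMonoOn.strictConvexOn_of_deriv (convex_Ioi T) (fun t ht =>
    (hasDerivAt_logOneSubRpowDiv hξ0 hξ1 (hpos t ht)).continuousAt.continuousWithinAt) ?_
  rw [interior_Ioi]
  refine (strictMonoOn_of_hasDerivWithinAt_pos (convex_Ioi T)
    (f' := fun t => (t ^ 2)⁻¹ - ξ ^ t * log ξ ^ 2 / (1 - ξ ^ t) ^ 2)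
    (f := fun t => -(ξ ^ t * log ξ) / (1 - ξ ^ t) - t⁻¹) ?_ ?_ ?_).congr ?_
  · exact fun t ht =>
      (hasDerivAt_deriv_logOneSubRpowDiv hξ0 hξ1 (hpos t ht)).continuousAt.continuousWithinAt
  · rw [interior_Ioi]
    exact fun t ht => (hasDerivAt_deriv_logOneSubRpowDiv hξ0 hξ1 (hpos t ht)).hasDerivWithinAt
  · rw [interior_Ioi]
    exact fun t ht => (hT₀ t (hT.trans ht.le)).1
  · exact fun t ht => (hasDerivAt_logOneSubRpowDiv hξ0 hξ1 (hpos t ht)).deriv.symm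

theorem hankel_stmt7_general (ξ m : ℝ) (hξ0 : 0 < ξ) (hξ1 : ξ < 1) :
    ∀ δ ∈ Set.Ioo 0 m, ∃ l₁ > 4 * m, ∀ l ≥ l₁,
      StrictMonoOn
        (fun x : ℝ => (1 - ξ ^ (l + x)) * (1 - ξ ^ (l - x)) / (l ^ 2 - x ^ 2))
        (Set.Icc δ m) := by
  rintro δ ⟨hδ, -⟩
  obtain ⟨T, hconv, hT⟩ := ((eventually_strictConvexOn_logOneSubRpowDiv hξ0 hξ1).and
    (eventually_ge_atTop 0)).exists
  refine ⟨max (T + m + 1) (4 * m + 1), lt_max_of_lt_right (by linarith), ?_⟩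
  rintro l hl x ⟨hδx, hxm⟩ y ⟨-, hym⟩ hxy
  have hlm : T + m < l := by linarith [le_max_left (T + m + 1) (4 * m + 1)]
  have hx0 : 0 < x := hδ.trans_le hδx
  beta_reduce
  rw [one_sub_rpow_mul_one_sub_rpow_div_eq_exp hξ0.le hξ1 (by linarith) (by linarith),
    one_sub_rpow_mul_one_sub_rpow_div_eq_exp hξ0.le hξ1 (by linarith) (by linarith)]
  exact exp_lt_exp.2 (hconv.map_add_add_map_sub_lt hx0.le hxy
    (show T < l - y by linarith) (show T < l + y by linarith))

/-- For `0 < ξ < 1`, `m > 0`, and any `δ ∈ (0, m)`, there is `l₁ > 4m` such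
that `f_l(x) = (1 − ξ^{l+x})(1 − ξ^{l−x})/(l² − x²)` is strictly increasing on
`[δ, m]` for every `l ≥ l₁`. -/
theorem hankel_stmt7 (ξ m : ℝ) (hξ0 : 0 < ξ) (hξ1 : ξ < 1) (hm : 0 < m) :
    ∀ δ ∈ Set.Ioo 0 m, ∃ l₁ > 4 * m, ∀ l ≥ l₁,
      StrictMonoOn
        (fun x : ℝ => (1 - ξ ^ (l + x)) * (1 - ξ ^ (l - x)) / (l ^ 2 - x ^ 2))
        (Set.Icc δ m) :=
  hankel_stmt7_general ξ m hξ0 hξ1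
end

section
/- Fix 0 < ξ < 1 and an integer m ≥ 1. Then there exists an integer l > m with l ≠ 0 such that (l² − m²)/l² ≠ (1 − ξ^{l+m})(1 − ξ^{l−m})/(1 − ξ^l)². -/
set_option maxHeartbeats 1000000 in
/-- For `0 < ξ < 1` and an integer `m ≥ 1` there is an integer `l > m`, `l ≠ 0`,
for which `(l² − m²)/l² ≠ (1 − ξ^{l+m})(1 − ξ^{l−m})/(1 − ξ^l)²`. -/
theorem hankel_stmt8 (ξ : ℝ) (hξ0 : 0 < ξ) (hξ1 : ξ < 1) (m : ℤ) (hm : 1 ≤ m) :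
    ∃ l : ℤ, m < l ∧ l ≠ 0 ∧
      ((l : ℝ) ^ 2 - (m : ℝ) ^ 2) / (l : ℝ) ^ 2 ≠
        (1 - ξ ^ (l + m)) * (1 - ξ ^ (l - m)) / (1 - ξ ^ l) ^ 2 := by
  have hξne : ξ ≠ 0 := hξ0.ne'
  set k := m.toNat with hkdef
  have hk : (k : ℤ) = m := Int.toNat_of_nonneg (by linarith)
  have hk1 : 1 ≤ k := by omega
  have hmk : (k : ℝ) = (m : ℝ) := by exact_mod_cast congrArg Int.cast hk
  have hm' : (0:ℝ) < (m:ℝ) := by exact_mod_cast (by linarith : (0:ℤ) < m)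
  have hε : (0:ℝ) < ((m:ℝ)*(1-ξ))^2/((m:ℝ)+1)^2 := by
    have h1 : (0:ℝ) < (m:ℝ)*(1-ξ) := by nlinarith
    exact div_pos (by positivity) (by positivity)
  have htend : Filter.Tendsto (fun n : ℕ => (n:ℝ)^2 * ξ^n) Filter.atTop (nhds 0) := by
    have h : Summable (fun n : ℕ => (n:ℝ)^2 * ξ^n) := by
      apply Summable.of_norm
      exact summable_norm_pow_mul_geometric_of_norm_lt_one 2
        (by rw [Real.norm_eq_abs, abs_of_pos hξ0]; exact hξ1)
    exact h.tendsto_atTop_zero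
  obtain ⟨N, hN⟩ := Filter.eventually_atTop.mp (htend.eventually (gt_mem_nhds hε))
  set n := max N 1 with hndef
  have hn1 : 1 ≤ n := le_max_right _ _
  have hbound : (n:ℝ)^2 * ξ^n < ((m:ℝ)*(1-ξ))^2/((m:ℝ)+1)^2 := hN n (le_max_left _ _)
  refine ⟨(k:ℤ) + n, by omega, by omega, ?_⟩
  -- rewrite zpows as natural powers
  have e1 : ξ ^ (((k:ℤ) + n) + m) = ξ ^ (2*k+n) := by
    rw [← hk, show ((k:ℤ) + n + k) = ((2*k+n : ℕ) : ℤ) by push_cast; ring, zpow_natCast]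
  have e2 : ξ ^ (((k:ℤ) + n) - m) = ξ ^ n := by
    rw [← hk, show ((k:ℤ) + n - k) = ((n : ℕ) : ℤ) by push_cast; ring, zpow_natCast]
  have e3 : ξ ^ ((k:ℤ) + n) = ξ ^ (k+n) := by
    rw [show ((k:ℤ) + n) = ((k+n : ℕ) : ℤ) by push_cast; ring, zpow_natCast]
  rw [e1, e2, e3]
  intro heq
  set b := ξ ^ k with hb
  set c := ξ ^ n with hc
  have hb0 : 0 < b := pow_pos hξ0 _
  have hc0 : 0 < c := pow_pos hξ0 _
  have hbc : b * c ≤ ξ := by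
    have : ξ ^ (k+n) ≤ ξ ^ 1 := pow_le_pow_of_le_one hξ0.le hξ1.le (by omega)
    rw [pow_add] at this; simpa using this
  have hbcl : b * c < 1 := lt_of_le_of_lt hbc hξ1
  have hb1 : b < 1 := by
    have h : ξ ^ k ≤ ξ := by simpa using pow_le_pow_of_le_one hξ0.le hξ1.le hk1
    exact lt_of_le_of_lt h hξ1
  have hc1 : c ≤ ξ := by simpa using pow_le_pow_of_le_one hξ0.le hξ1.le hn1
  have e4 : ξ ^ (2*k+n) = b^2 * c := by rw [pow_add, pow_mul]; ring
  have e5 : ξ ^ (k+n) = b * c := by rw [pow_add]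
  rw [e4, e5] at heq
  have hd : (0:ℝ) < (1 - b*c)^2 := by nlinarith
  have hL : ((((k:ℤ) + n : ℤ)) : ℝ) = (m:ℝ) + n := by push_cast [hk]; ring
  rw [hL] at heq
  have hLpos : (0:ℝ) < ((m:ℝ) + n)^2 := by positivity
  rw [div_eq_div_iff (ne_of_gt hLpos) (ne_of_gt hd)] at heq
  -- heq : ((m+n)^2 - m^2) * (1 - b*c)^2 = (1 - b^2*c) * (1 - c) * (m+n)^2
  -- key bound : (m+n)^2 * c < (m*(1-ξ))^2
  have hnR : (1:ℝ) ≤ (n:ℝ) := by exact_mod_cast hn1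
  have hkey : ((m:ℝ) + n)^2 * c < ((m:ℝ)*(1-ξ))^2 := by
    have h1 : (m:ℝ) + n ≤ ((m:ℝ)+1) * n := by nlinarith
    have h2 : ((m:ℝ) + n)^2 ≤ (((m:ℝ)+1) * (n:ℝ))^2 := by
      apply pow_le_pow_left₀ (by positivity) h1
    have h2' := mul_le_mul_of_nonneg_right h2 hc0.le
    have h2 : ((m:ℝ) + n)^2 * c ≤ ((m:ℝ)+1)^2 * ((n:ℝ)^2 * c) := by nlinarith [h2']
    have h3 : ((m:ℝ)+1)^2 * ((n:ℝ)^2 * c) < ((m:ℝ)+1)^2 * (((m:ℝ)*(1-ξ))^2/((m:ℝ)+1)^2) := by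
      apply mul_lt_mul_of_pos_left hbound (by positivity)
    have h4 : ((m:ℝ)+1)^2 * (((m:ℝ)*(1-ξ))^2/((m:ℝ)+1)^2) = ((m:ℝ)*(1-ξ))^2 := by
      field_simp
    linarith
  -- from heq: m^2 (1-bc)^2 = (m+n)^2 c (1-b)^2
  have hmain : (m:ℝ)^2 * (1 - b*c)^2 = ((m:ℝ)+n)^2 * c * (1-b)^2 := by nlinarith [heq]
  have hub : ((m:ℝ)+n)^2 * c * (1-b)^2 ≤ ((m:ℝ)+n)^2 * c := by
    have h5 : (1-b)^2 ≤ 1 := by nlinarith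
    exact mul_le_of_le_one_right (by positivity) h5
  have hlb : ((m:ℝ)*(1-ξ))^2 ≤ (m:ℝ)^2 * (1 - b*c)^2 := by
    have h6 : (1-ξ)^2 ≤ (1-b*c)^2 := pow_le_pow_left₀ (by linarith) (by linarith) 2
    nlinarith [mul_le_mul_of_nonneg_left h6 (sq_nonneg (m:ℝ))]
  linarith
end

section
/- Fix 0 < ξ < 1 and m > 0 real. There exist δ ∈ (0, m) and l₀ > 4m such that for all real l ≥ l₀ and all x ∈ [0, δ], the quantity (l² − x²)·ξ^l·ln(ξ)·((ξ^{−x} − ξ^{x})/((ξ^x − ξ^l)(ξ^{−x} − ξ^l))) + 2x is at least x/2. -/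
open Filter Real

private lemma sq_mul_rpow_tendsto {ξ : ℝ} (hξ0 : 0 < ξ) (hξ1 : ξ < 1) :
    Tendsto (fun l : ℝ => l ^ 2 * ξ ^ l) atTop (nhds 0) := by
  set L : ℝ := -Real.log ξ with hL
  have hLpos : 0 < L := by
    have := Real.log_neg hξ0 hξ1
    simp [hL]; linarith
  have h1 : Tendsto (fun x : ℝ => x ^ 2 * Real.exp (-x)) atTop (nhds 0) :=
    tendsto_pow_mul_exp_neg_atTop_nhds_zero 2
  have h2 : Tendsto (fun l : ℝ => L * l) atTop atTop :=
    tendsto_id.const_mul_atTop hLpos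
  have h3 := h1.comp h2
  have h4 : Tendsto (fun l : ℝ => (L ^ 2)⁻¹ * ((L * l) ^ 2 * Real.exp (-(L * l))))
      atTop (nhds 0) := by
    simpa using h3.const_mul (L ^ 2)⁻¹
  refine h4.congr fun l => ?_
  have hexp : ξ ^ l = Real.exp (-(L * l)) := by
    rw [Real.rpow_def_of_pos hξ0]
    congr 1
    rw [hL]; ring
  rw [hexp]
  field_simp

private lemma sinh_bound {t : ℝ} (ht0 : 0 ≤ t) (ht : t ≤ 1 / 3) :
    Real.exp t - Real.exp (-t) ≤ 3 * t := by
  have h1 : 1 - t ≤ Real.exp (-t) := by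
    have := Real.add_one_le_exp (-t); linarith
  have h2 : Real.exp t * Real.exp (-t) = 1 := by
    rw [← Real.exp_add]; simp
  have h3 : 0 < Real.exp (-t) := Real.exp_pos _
  have h4 : 0 < Real.exp t := Real.exp_pos _
  nlinarith [sq_nonneg (Real.exp (-t) - (1 - t)), sq_nonneg t,
    mul_pos h3 h4, mul_nonneg ht0 h3.le]

/-- For `0 < ξ < 1` and `m > 0` there exist `δ ∈ (0, m)` and `l₀ > 4m` such
that for all `l ≥ l₀` and `x ∈ [0, δ]`,
`(l² − x²) ξ^l ln ξ · (ξ^{−x} − ξ^{x})/((ξ^x − ξ^l)(ξ^{−x} − ξ^l)) + 2x ≥ x/2`. -/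
theorem hankel_stmt17 (ξ m : ℝ) (hξ0 : 0 < ξ) (hξ1 : ξ < 1) (hm : 0 < m) :
    ∃ δ ∈ Set.Ioo 0 m, ∃ l₀ > 4 * m, ∀ l ≥ l₀, ∀ x ∈ Set.Icc (0 : ℝ) δ,
      x / 2 ≤ (l ^ 2 - x ^ 2) * ξ ^ l * Real.log ξ *
          ((ξ ^ (-x) - ξ ^ x) / ((ξ ^ x - ξ ^ l) * (ξ ^ (-x) - ξ ^ l))) + 2 * x := by
  set L : ℝ := -Real.log ξ with hLdef
  have hLpos : 0 < L := by
    have := Real.log_neg hξ0 hξ1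
    simp [hLdef]; linarith
  -- choose δ
  set δ : ℝ := min (m / 2) (1 / (3 * L)) with hδdef
  have hδpos : 0 < δ := lt_min (by linarith) (by positivity)
  have hδm : δ < m := lt_of_le_of_lt (min_le_left _ _) (by linarith)
  have hδL : δ * L ≤ 1 / 3 := by
    have h : δ ≤ 1 / (3 * L) := min_le_right _ _
    calc δ * L ≤ (1 / (3 * L)) * L := by nlinarith
      _ = 1 / 3 := by field_simp
  have hξδpos : 0 < ξ ^ δ := Real.rpow_pos_of_pos hξ0 δ
  -- choose l₀
  have hev1 : ∀ᶠ l : ℝ in atTop, ξ ^ l < ξ ^ δ / 2 := by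
    refine (tendsto_rpow_atTop_of_base_lt_one ξ (by linarith) hξ1).eventually_lt_const ?_
    positivity
  have hev2 : ∀ᶠ l : ℝ in atTop, l ^ 2 * ξ ^ l < (ξ ^ δ) ^ 2 / (8 * L ^ 2) := by
    refine (sq_mul_rpow_tendsto hξ0 hξ1).eventually_lt_const ?_
    positivity
  obtain ⟨l₀, hl₀⟩ := eventually_atTop.mp (hev1.and hev2)
  refine ⟨δ, ⟨hδpos, hδm⟩, max l₀ (4 * m + 1),
    lt_of_lt_of_le (by linarith) (le_max_right _ _), fun l hl x hx => ?_⟩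
  obtain ⟨hx0, hxδ⟩ := hx
  have hll₀ : l₀ ≤ l := le_trans (le_max_left _ _) hl
  have hlge : 4 * m + 1 ≤ l := le_trans (le_max_right _ _) hl
  obtain ⟨hsmall, hsq⟩ := hl₀ l hll₀
  have hδl : δ < l := by linarith
  have hxl : x < l := lt_of_le_of_lt hxδ hδl
  -- basic positivity
  have hξl : 0 < ξ ^ l := Real.rpow_pos_of_pos hξ0 l
  have hξx : 0 < ξ ^ x := Real.rpow_pos_of_pos hξ0 x
  -- ξ^δ ≤ ξ^x
  have hδx : ξ ^ δ ≤ ξ ^ x := Real.rpow_le_rpow_of_exponent_ge hξ0 hξ1.le hxδ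
  -- 1 ≤ ξ^(-x)
  have hone : (1:ℝ) ≤ ξ ^ (-x) := by
    have h : ξ ^ (0:ℝ) ≤ ξ ^ (-x) :=
      Real.rpow_le_rpow_of_exponent_ge hξ0 hξ1.le (by linarith)
    simpa using h
  have hξδ1 : ξ ^ δ ≤ 1 := Real.rpow_le_one hξ0.le hξ1.le hδpos.le
  -- denominators
  have hA : ξ ^ δ / 2 ≤ ξ ^ x - ξ ^ l := by linarith
  have hB : ξ ^ δ / 2 ≤ ξ ^ (-x) - ξ ^ l := by linarith
  have hApos : 0 < ξ ^ x - ξ ^ l := lt_of_lt_of_le (by positivity) hA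
  have hBpos : 0 < ξ ^ (-x) - ξ ^ l := lt_of_lt_of_le (by positivity) hB
  -- numerator bound
  have hN0 : 0 ≤ ξ ^ (-x) - ξ ^ x := by
    have : ξ ^ x ≤ 1 := Real.rpow_le_one hξ0.le hξ1.le hx0
    linarith
  have hNbound : ξ ^ (-x) - ξ ^ x ≤ 3 * (L * x) := by
    have hxL : L * x ≤ 1 / 3 := by nlinarith
    have hxL0 : 0 ≤ L * x := mul_nonneg hLpos.le hx0
    have h1 : ξ ^ (-x) = Real.exp (L * x) := by
      rw [Real.rpow_def_of_pos hξ0]; congr 1; rw [hLdef]; ring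
    have h2 : ξ ^ x = Real.exp (-(L * x)) := by
      rw [Real.rpow_def_of_pos hξ0]; congr 1; rw [hLdef]; ring
    rw [h1, h2]
    exact sinh_bound hxL0 hxL
  -- the fraction
  have hlogξ : Real.log ξ = -L := by simp [hLdef]
  set F : ℝ := (ξ ^ (-x) - ξ ^ x) / ((ξ ^ x - ξ ^ l) * (ξ ^ (-x) - ξ ^ l)) with hF
  have hFnonneg : 0 ≤ F := div_nonneg hN0 (by positivity)
  have h3Lx : 0 ≤ 3 * (L * x) := by positivity
  have hden : (ξ ^ δ / 2) * (ξ ^ δ / 2) ≤ (ξ ^ x - ξ ^ l) * (ξ ^ (-x) - ξ ^ l) :=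
    mul_le_mul hA hB (by positivity) hApos.le
  set c2 : ℝ := (3 * (L * x)) / ((ξ ^ δ / 2) * (ξ ^ δ / 2)) with hc2
  have hFbound : F ≤ c2 := div_le_div₀ h3Lx hNbound (by positivity) hden
  set c1 : ℝ := (ξ ^ δ) ^ 2 / (8 * L ^ 2) with hc1
  -- the key term
  have hterm : -(3 / 2) * x ≤ (l ^ 2 - x ^ 2) * ξ ^ l * Real.log ξ * F := by
    rw [hlogξ]
    have h1 : (l ^ 2 - x ^ 2) * ξ ^ l * -L * F = -((l ^ 2 - x ^ 2) * ξ ^ l * L * F) := by ring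
    rw [h1, neg_mul, neg_le_neg_iff]
    have hlx : l ^ 2 - x ^ 2 ≤ l ^ 2 := by nlinarith
    have hmono : (l ^ 2 - x ^ 2) * ξ ^ l ≤ l ^ 2 * ξ ^ l :=
      mul_le_mul_of_nonneg_right hlx hξl.le
    have step1 : (l ^ 2 - x ^ 2) * ξ ^ l * L * F ≤ l ^ 2 * ξ ^ l * L * F := by
      calc (l ^ 2 - x ^ 2) * ξ ^ l * L * F
          = ((l ^ 2 - x ^ 2) * ξ ^ l) * (L * F) := by ring
        _ ≤ (l ^ 2 * ξ ^ l) * (L * F) :=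
            mul_le_mul_of_nonneg_right hmono (mul_nonneg hLpos.le hFnonneg)
        _ = l ^ 2 * ξ ^ l * L * F := by ring
    have key : l ^ 2 * ξ ^ l * F ≤ c1 * c2 :=
      mul_le_mul hsq.le hFbound hFnonneg (by positivity)
    have step2 : l ^ 2 * ξ ^ l * L * F ≤ c1 * c2 * L := by
      calc l ^ 2 * ξ ^ l * L * F = L * (l ^ 2 * ξ ^ l * F) := by ring
        _ ≤ L * (c1 * c2) := mul_le_mul_of_nonneg_left key hLpos.le
        _ = c1 * c2 * L := by ring
    have step3 : c1 * c2 * L = (3 / 2) * x := by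
      rw [hc1, hc2]
      field_simp
      ring
    exact (step1.trans step2).trans step3.le
  linarith
end
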